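/- Let M : [0,∞) → [0,∞) be nondecreasing with ∫₁^∞ M(s) s^{-2} ds < ∞, and let η̃(ρ) = ρ ∫_ρ^∞ M(s) s^{-2} ds for ρ > 0, η̃(0) = 0. Then η̃ is subadditive: η̃(ρ+λ) ≤ η̃(ρ) + η̃(λ) for all ρ, λ ≥ 0. -/

import Mathlib

open MeasureTheory

/-! The tail integral `I(ρ) = ∫_ρ^∞ M(s) s⁻² ds` is finite for `ρ > 0` (monotonicity bounds `M` on
`[ρ, 1]`) and, having a nonnegative integrand, nonincreasing in `ρ`. Then
`η̃(ρ + λ) = ρ I(ρ + λ) + λ I(ρ + λ) ≤ ρ I(ρ) + λ I(λ)`. -/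

/-- `η̃(ρ) = ρ ∫_ρ^∞ M(s) s⁻² ds` (with `η̃(0) = 0`, as the factor `ρ` vanishes). -/
noncomputable def etaTilde (M : ℝ → ℝ) (ρ : ℝ) : ℝ :=
  ρ * ∫ s in Set.Ioi ρ, M s / s ^ 2

theorem add_mul_apply_add_le_of_antitoneOn {g : ℝ → ℝ} (hg : AntitoneOn g (Set.Ioi 0))
    {ρ lam : ℝ} (hρ : 0 ≤ ρ) (hlam : 0 ≤ lam) :
    (ρ + lam) * g (ρ + lam) ≤ ρ * g ρ + lam * g lam := by
  rcases hρ.eq_or_lt with rfl | hρ'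
  · simp
  rcases hlam.eq_or_lt with rfl | hlam'
  · simp
  have hsum : ρ + lam ∈ Set.Ioi 0 := add_pos hρ' hlam'
  have hρ_le : g (ρ + lam) ≤ g ρ := hg hρ' hsum (le_add_of_nonneg_right hlam)
  have hlam_le : g (ρ + lam) ≤ g lam := hg hlam' hsum (le_add_of_nonneg_left hρ)
  rw [add_mul]
  exact add_le_add (mul_le_mul_of_nonneg_left hρ_le hρ) (mul_le_mul_of_nonneg_left hlam_le hlam)

theorem integrableOn_Ioi_div_sq_of_monotoneOn {M : ℝ → ℝ} (hM : MonotoneOn M (Set.Ioi 0))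
    (hint : IntegrableOn (fun s => M s / s ^ 2) (Set.Ioi 1)) {a : ℝ} (ha : 0 < a) :
    IntegrableOn (fun s => M s / s ^ 2) (Set.Ioi a) := by
  have hIcc_pos : Set.Icc a 1 ⊆ Set.Ioi 0 := fun s hs => ha.trans_le hs.1
  have hM_Icc : IntegrableOn M (Set.Icc a 1) :=
    (hM.mono hIcc_pos).integrableOn_isCompact isCompact_Icc
  have hcont : ContinuousOn (fun s : ℝ => (s ^ 2)⁻¹) (Set.Icc a 1) :=
    (continuousOn_pow 2).inv₀ fun s hs => pow_ne_zero 2 (hIcc_pos hs).ne'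
  have hIcc : IntegrableOn (fun s => M s / s ^ 2) (Set.Icc a 1) := by
    simpa only [div_eq_mul_inv] using hM_Icc.mul_continuousOn hcont isCompact_Icc
  refine (hIcc.union hint).mono_set fun s hs => ?_
  rcases le_or_gt s 1 with hs1 | hs1
  · exact Or.inl ⟨(Set.mem_Ioi.1 hs).le, hs1⟩
  · exact Or.inr hs1

theorem antitoneOn_setIntegral_Ioi {f : ℝ → ℝ} (hf : ∀ s, 0 < s → 0 ≤ f s)
    (hint : ∀ a, 0 < a → IntegrableOn f (Set.Ioi a)) :
    AntitoneOn (fun a => ∫ s in Set.Ioi a, f s) (Set.Ioi 0) := by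
  intro a ha b _ hab
  refine setIntegral_mono_set (hint a ha) ?_ (Set.Ioi_subset_Ioi hab).eventuallyLE
  filter_upwards [ae_restrict_mem measurableSet_Ioi] with s hs
  exact hf s (lt_trans ha hs)

theorem stmt_10 (M : ℝ → ℝ) (hnonneg : ∀ s, 0 ≤ s → 0 ≤ M s)
    (hmono : MonotoneOn M (Set.Ici (0 : ℝ)))
    (hint : IntegrableOn (fun s => M s / s ^ 2) (Set.Ioi (1 : ℝ))) :
    ∀ ρ lam : ℝ, 0 ≤ ρ → 0 ≤ lam →
      etaTilde M (ρ + lam) ≤ etaTilde M ρ + etaTilde M lam := by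
  intro ρ lam hρ hlam
  have hint_Ioi : ∀ a, 0 < a → IntegrableOn (fun s => M s / s ^ 2) (Set.Ioi a) := fun a ha =>
    integrableOn_Ioi_div_sq_of_monotoneOn (hmono.mono Set.Ioi_subset_Ici_self) hint ha
  have hanti := antitoneOn_setIntegral_Ioi
    (fun s hs => div_nonneg (hnonneg s hs.le) (sq_nonneg s)) hint_Ioi
  exact add_mul_apply_add_le_of_antitoneOn hanti hρ hlam
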